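/- Let h ≥ 1 and w = m·h for an integer m ≥ 1, and let ε > 0. Partition {1, …, w} × {1, …, w} into the m² blocks B_{(r,s)} = {rh+1, …, (r+1)h} × {sh+1, …, (s+1)h} for r, s ∈ {0, …, m−1}. For a block (r,s) and signs σ ∈ {−1, 1}^{B_{(r,s)}}, let δ^{(r,s,σ)} ∈ ℝ^{w × w} equal 2ε·σ_{k,l} at each (k,l) ∈ B_{(r,s)} and 0 elsewhere. Then for every v ∈ ℝ^{w × w}, the expectation of |⟨δ, v⟩| under the uniform distribution over (r, s) and over σ ∈ {−1,1}^{h×h} satisfies E|⟨δ, v⟩| ≥ √2 · ε · (h²/w²) · ‖v‖₂. -/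

import Mathlib

/-!
On each block, `⟨δ, v⟩` is the Rademacher sum `∑ₚ 2ε σₚ vₚ` over the block, so the theorem
follows from Khintchine's inequality with Szarek's sharp constant, `𝔼|∑ aᵢσᵢ| ≥ ‖a‖₂ / √2`,
together with `√(∑ xᵢ) ≤ ∑ √xᵢ` over the blocks.

For Khintchine we follow Latała–Oleszkiewicz. The function `f = |∑ aᵢσᵢ|` is even, so its
Walsh coefficients of level one vanish, and the Poincaré inequality on the cube improves to
`Var f ≤ ½ ∑_T |T| f̂(T)² = ⅛ ∑ᵢ 𝔼 (f - f ∘ flipᵢ)² ≤ ½ ∑ aᵢ² = ½ 𝔼 f²`,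
that is `(𝔼 f)² ≥ ½ 𝔼 f²`.
-/

open Finset

lemma sum_sq_sum_mul {R α ι : Type*} [CommSemiring R] (s : Finset α) (t : Finset ι) (c : ι → R)
    (φ : ι → α → R) :
    ∑ x ∈ s, (∑ i ∈ t, c i * φ i x) ^ 2 = ∑ i ∈ t, ∑ j ∈ t, c i * c j * ∑ x ∈ s, φ i x * φ j x := by
  have hexpand (x : α) :
      (∑ i ∈ t, c i * φ i x) ^ 2 = ∑ i ∈ t, ∑ j ∈ t, c i * c j * (φ i x * φ j x) := by
    rw [sq, sum_mul_sum]
    exact sum_congr rfl fun i _ => sum_congr rfl fun j _ => by ring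
  simp only [hexpand, mul_sum]
  rw [sum_comm]
  exact sum_congr rfl fun i _ => sum_comm

lemma sum_eq_zero_of_perm_eq_neg {α M : Type*} [Fintype α] [AddCommGroup M]
    [NoZeroSMulDivisors ℕ M] (e : Equiv.Perm α) {g : α → M} (hg : ∀ x, g (e x) = -g x) :
    ∑ x, g x = 0 := by
  have h := Equiv.sum_comp e g
  simp only [hg, sum_neg_distrib, neg_eq_iff_add_eq_zero, ← two_nsmul] at h
  exact (smul_eq_zero.mp h).resolve_left two_ne_zero

lemma Real.sqrt_sum_le_sum_sqrt {ι : Type*} (s : Finset ι) {f : ι → ℝ} (hf : ∀ i ∈ s, 0 ≤ f i) :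
    √(∑ i ∈ s, f i) ≤ ∑ i ∈ s, √(f i) := by
  refine Real.sqrt_le_iff.mpr ⟨sum_nonneg fun i _ => Real.sqrt_nonneg _, ?_⟩
  calc ∑ i ∈ s, f i = ∑ i ∈ s, √(f i) ^ 2 := sum_congr rfl fun i hi => (Real.sq_sqrt (hf i hi)).symm
    _ ≤ (∑ i ∈ s, √(f i)) ^ 2 := sum_sq_le_sq_sum_of_nonneg fun i _ => Real.sqrt_nonneg _

lemma sum_Icc_one_mul_eq_sum_blocks {M : Type*} [AddCommMonoid M] (m h : ℕ) (f : ℕ → M) :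
    ∑ k ∈ Icc 1 (m * h), f k = ∑ r ∈ range m, ∑ k : Fin h, f (r * h + 1 + k) := by
  rw [← Ico_add_one_right_eq_Icc, sum_Ico_eq_sum_range, Nat.add_sub_cancel,
    ← Fin.sum_univ_eq_sum_range, ← finProdFinEquiv.sum_comp,
    ← Fin.sum_univ_eq_sum_range (fun r => ∑ k : Fin h, f (r * h + 1 + k)), Fintype.sum_prod_type]
  refine sum_congr rfl fun r _ => sum_congr rfl fun k _ => ?_
  simp only [finProdFinEquiv_apply_val]
  ring_nf

lemma sum_Icc_sum_Icc_eq_sum_blocks {M : Type*} [AddCommMonoid M] (m h : ℕ) (F : ℕ → ℕ → M) :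
    ∑ k ∈ Icc 1 (m * h), ∑ l ∈ Icc 1 (m * h), F k l
      = ∑ r ∈ range m, ∑ s ∈ range m, ∑ p : Fin h × Fin h, F (r * h + 1 + p.1) (s * h + 1 + p.2) := by
  simp only [sum_Icc_one_mul_eq_sum_blocks, Fintype.sum_prod_type]
  exact sum_congr rfl fun r _ => sum_comm

lemma index_mem_block_iff {h r r' k : ℕ} (hk : k < h) :
    r * h + 1 ≤ r' * h + 1 + k ∧ r' * h + 1 + k ≤ (r + 1) * h ↔ r' = r := by
  constructor
  · rintro ⟨hlo, hhi⟩
    have hlt : r' * h < (r + 1) * h := by omega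
    have hlt' : r * h < (r' + 1) * h := by rw [add_one_mul]; omega
    have := Nat.lt_of_mul_lt_mul_right hlt
    have := Nat.lt_of_mul_lt_mul_right hlt'
    omega
  · rintro rfl
    rw [add_one_mul]
    omega

lemma sum_Icc_sum_Icc_eq_sum_block {M : Type*} [AddCommMonoid M] {m h r s : ℕ} (hr : r < m)
    (hs : s < m) (d : ℕ → ℕ → M)
    (hd : ∀ k l, ¬(r * h + 1 ≤ k ∧ k ≤ (r + 1) * h ∧ s * h + 1 ≤ l ∧ l ≤ (s + 1) * h) →
      d k l = 0) :
    ∑ k ∈ Icc 1 (m * h), ∑ l ∈ Icc 1 (m * h), d k l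
      = ∑ p : Fin h × Fin h, d (r * h + 1 + p.1) (s * h + 1 + p.2) := by
  rw [sum_Icc_sum_Icc_eq_sum_blocks, sum_eq_single_of_mem r (mem_range.mpr hr),
    sum_eq_single_of_mem s (mem_range.mpr hs)]
  · intro s' _ hs'
    refine sum_eq_zero fun p _ => hd _ _ fun hmem => hs' ?_
    exact (index_mem_block_iff p.2.isLt).mp ⟨hmem.2.2.1, hmem.2.2.2⟩
  · intro r' _ hr'
    refine sum_eq_zero fun s' _ => sum_eq_zero fun p _ => hd _ _ fun hmem => hr' ?_
    exact (index_mem_block_iff p.1.isLt).mp ⟨hmem.1, hmem.2.1⟩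

namespace BoolCube

def boolSign (b : Bool) : ℝ := if b then 1 else -1

@[simp] lemma boolSign_mul_self (b : Bool) : boolSign b * boolSign b = 1 := by
  cases b <;> norm_num [boolSign]

@[simp] lemma boolSign_not (b : Bool) : boolSign (!b) = -boolSign b := by
  cases b <;> simp [boolSign]

@[simp] lemma abs_boolSign (b : Bool) : |boolSign b| = 1 := by
  cases b <;> simp [boolSign]

variable {I : Type*}

def walsh (T : Finset I) (σ : I → Bool) : ℝ := ∏ i ∈ T, boolSign (σ i)

section Flip

variable [DecidableEq I]

def flipAt (i : I) (σ : I → Bool) : I → Bool := Function.update σ i (!σ i)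

lemma flipAt_involutive (i : I) : Function.Involutive (flipAt i) := by
  intro σ
  ext j
  by_cases hj : j = i
  · subst hj; simp [flipAt]
  · simp [flipAt, hj]

lemma walsh_flipAt (T : Finset I) (i : I) (σ : I → Bool) :
    walsh T (flipAt i σ) = (if i ∈ T then -1 else 1) * walsh T σ := by
  unfold walsh flipAt
  split_ifs with hi
  · rw [← mul_prod_erase T _ hi, ← mul_prod_erase T _ hi,
      prod_congr rfl fun j hj => by rw [Function.update_of_ne (ne_of_mem_erase hj)]]
    simp
  · rw [one_mul]
    exact prod_congr rfl fun j hj => by rw [Function.update_of_ne (ne_of_mem_of_not_mem hj hi)]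

end Flip

variable [Fintype I] [DecidableEq I]

def walshCoeff (f : (I → Bool) → ℝ) (T : Finset I) : ℝ := ∑ σ, f σ * walsh T σ

lemma sum_walsh_mul_walsh (σ τ : I → Bool) :
    ∑ T, walsh T σ * walsh T τ = if σ = τ then 2 ^ Fintype.card I else 0 := by
  have hprod : ∑ T, walsh T σ * walsh T τ = ∏ i, (boolSign (σ i) * boolSign (τ i) + 1) := by
    simp [Fintype.prod_add, walsh, prod_mul_distrib]
  rw [hprod]
  split_ifs with hστ
  · simp [hστ, one_add_one_eq_two]
  · obtain ⟨i, hi⟩ := Function.ne_iff.mp hστ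
    refine prod_eq_zero (mem_univ i) ?_
    cases hσ : σ i <;> cases hτ : τ i <;> simp_all [boolSign]

theorem sum_sq_walshCoeff (f : (I → Bool) → ℝ) :
    ∑ T, walshCoeff f T ^ 2 = 2 ^ Fintype.card I * ∑ σ, f σ ^ 2 := by
  simp only [walshCoeff]
  rw [sum_sq_sum_mul]
  simp [sum_walsh_mul_walsh, mul_sum, sq, mul_comm]

lemma walshCoeff_sub_comp_flipAt (f : (I → Bool) → ℝ) (i : I) (T : Finset I) :
    walshCoeff (fun σ => f σ - f (flipAt i σ)) T = if i ∈ T then 2 * walshCoeff f T else 0 := by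
  have hflip : ∑ σ, f (flipAt i σ) * walsh T σ = (if i ∈ T then -1 else 1) * walshCoeff f T := by
    rw [walshCoeff, mul_sum, ← Equiv.sum_comp (flipAt_involutive i).toPerm]
    refine sum_congr rfl fun σ _ => ?_
    simp only [Function.Involutive.coe_toPerm, flipAt_involutive i σ, walsh_flipAt]
    ring
  simp only [walshCoeff, sub_mul, sum_sub_distrib] at hflip ⊢
  rw [hflip]
  split_ifs <;> ring

theorem four_mul_sum_card_mul_sq_walshCoeff (f : (I → Bool) → ℝ) :
    4 * ∑ T, (#T : ℝ) * walshCoeff f T ^ 2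
      = 2 ^ Fintype.card I * ∑ i, ∑ σ, (f σ - f (flipAt i σ)) ^ 2 := by
  calc 4 * ∑ T, (#T : ℝ) * walshCoeff f T ^ 2
      = ∑ i, ∑ T, walshCoeff (fun σ => f σ - f (flipAt i σ)) T ^ 2 := by
        simp only [walshCoeff_sub_comp_flipAt, ite_pow, mul_pow]
        rw [sum_comm, mul_sum]
        refine sum_congr rfl fun T _ => ?_
        simp only [ne_eq, OfNat.ofNat_ne_zero, not_false_eq_true, zero_pow, sum_ite_mem,
          univ_inter, sum_const, nsmul_eq_mul]
        ring
    _ = 2 ^ Fintype.card I * ∑ i, ∑ σ, (f σ - f (flipAt i σ)) ^ 2 := by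
        simp only [sum_sq_walshCoeff, mul_sum]

lemma walshCoeff_empty (f : (I → Bool) → ℝ) : walshCoeff f ∅ = ∑ σ, f σ := by
  simp [walshCoeff, walsh]

lemma walshCoeff_singleton_eq_zero_of_even {f : (I → Bool) → ℝ} (hf : ∀ σ, f σᶜ = f σ) (i : I) :
    walshCoeff f {i} = 0 :=
  sum_eq_zero_of_perm_eq_neg (compl_involutive.toPerm _) fun σ => by
    simp [hf, walsh]

lemma two_mul_sum_sq_le_of_singleton_eq_zero {g : Finset I → ℝ} (hg : ∀ i, g {i} = 0) :
    2 * ∑ T, g T ^ 2 ≤ 2 * g ∅ ^ 2 + ∑ T, (#T : ℝ) * g T ^ 2 := by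
  have hempty : 2 * g ∅ ^ 2 = ∑ T, if T = ∅ then 2 * g T ^ 2 else 0 := by simp
  rw [hempty, mul_sum, ← sum_add_distrib]
  refine sum_le_sum fun T _ => ?_
  obtain hT | hT | hT : #T = 0 ∨ #T = 1 ∨ 2 ≤ #T := by omega
  · simp [card_eq_zero.mp hT]
  · obtain ⟨i, rfl⟩ := card_eq_one.mp hT
    simp [hg]
  · have hT' : (2 : ℝ) ≤ #T := by exact_mod_cast hT
    have hne : T ≠ ∅ := by rintro rfl; simp at hT
    rw [if_neg hne, zero_add]
    exact mul_le_mul_of_nonneg_right hT' (sq_nonneg _)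

theorem sum_sq_le_sq_sum_add_of_even {f : (I → Bool) → ℝ} (hf : ∀ σ, f σᶜ = f σ) :
    2 ^ Fintype.card I * ∑ σ, f σ ^ 2
      ≤ (∑ σ, f σ) ^ 2 + 2 ^ Fintype.card I / 8 * ∑ i, ∑ σ, (f σ - f (flipAt i σ)) ^ 2 := by
  have hlevel := two_mul_sum_sq_le_of_singleton_eq_zero (walshCoeff_singleton_eq_zero_of_even hf)
  rw [sum_sq_walshCoeff, walshCoeff_empty] at hlevel
  have hinfl := four_mul_sum_card_mul_sq_walshCoeff f
  linarith

def rademacherSum (a : I → ℝ) (σ : I → Bool) : ℝ := ∑ i, a i * boolSign (σ i)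

lemma rademacherSum_sub_rademacherSum_flipAt (a : I → ℝ) (i : I) (σ : I → Bool) :
    rademacherSum a σ - rademacherSum a (flipAt i σ) = 2 * a i * boolSign (σ i) := by
  rw [rademacherSum, rademacherSum, ← sum_sub_distrib, sum_eq_single i]
  · simp [flipAt]; ring
  · intro j _ hj
    simp [flipAt, Function.update_of_ne hj]
  · simp

lemma sum_boolSign_mul_boolSign (i j : I) :
    ∑ σ : I → Bool, boolSign (σ i) * boolSign (σ j)
      = if i = j then 2 ^ Fintype.card I else 0 := by
  split_ifs with hij
  · simp [hij]
  · refine sum_eq_zero_of_perm_eq_neg (flipAt_involutive i).toPerm fun σ => ?_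
    simp [flipAt, Function.update_of_ne (Ne.symm hij)]

lemma sum_sq_rademacherSum (a : I → ℝ) :
    ∑ σ, rademacherSum a σ ^ 2 = 2 ^ Fintype.card I * ∑ i, a i ^ 2 := by
  simp only [rademacherSum]
  rw [sum_sq_sum_mul]
  simp [sum_boolSign_mul_boolSign, mul_sum, sq, mul_comm]

theorem khintchine (a : I → ℝ) :
    2 ^ Fintype.card I * √(∑ i, a i ^ 2) ≤ √2 * ∑ σ, |rademacherSum a σ| := by
  set f : (I → Bool) → ℝ := fun σ => |rademacherSum a σ|
  have hf_even : ∀ σ, f σᶜ = f σ := by simp [f, rademacherSum]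
  have hf_sq : ∑ σ, f σ ^ 2 = 2 ^ Fintype.card I * ∑ i, a i ^ 2 := by
    simp [f, sum_sq_rademacherSum]
  have hf_flip (i : I) (σ : I → Bool) : (f σ - f (flipAt i σ)) ^ 2 ≤ 4 * a i ^ 2 := by
    calc (f σ - f (flipAt i σ)) ^ 2 ≤ (rademacherSum a σ - rademacherSum a (flipAt i σ)) ^ 2 :=
          sq_le_sq.mpr (by simpa using abs_abs_sub_abs_le_abs_sub _ _)
      _ = 4 * a i ^ 2 := by
          rw [rademacherSum_sub_rademacherSum_flipAt, mul_pow, ← sq_abs (boolSign _), abs_boolSign]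
          ring
  have hinfl : ∑ i, ∑ σ, (f σ - f (flipAt i σ)) ^ 2 ≤ 2 ^ Fintype.card I * (4 * ∑ i, a i ^ 2) := by
    calc ∑ i, ∑ σ, (f σ - f (flipAt i σ)) ^ 2 ≤ ∑ i, ∑ _σ : I → Bool, 4 * a i ^ 2 :=
          sum_le_sum fun i _ => sum_le_sum fun σ _ => hf_flip i σ
      _ = 2 ^ Fintype.card I * (4 * ∑ i, a i ^ 2) := by simp [mul_sum]
  have hpoincare := sum_sq_le_sq_sum_add_of_even hf_even
  rw [hf_sq] at hpoincare
  have hsq : (2 ^ Fintype.card I * √(∑ i, a i ^ 2)) ^ 2 ≤ (√2 * ∑ σ, f σ) ^ 2 := by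
    rw [mul_pow, mul_pow, Real.sq_sqrt (by positivity), Real.sq_sqrt (by positivity)]
    nlinarith [pow_pos (two_pos : (0 : ℝ) < 2) (Fintype.card I)]
  exact le_of_sq_le_sq hsq (by positivity)

theorem khintchine_scaled {c : ℝ} (hc : 0 ≤ c) (b : I → ℝ) :
    2 ^ Fintype.card I * (√2 * c * √(∑ i, b i ^ 2))
      ≤ ∑ σ, |rademacherSum (fun i => 2 * c * b i) σ| := by
  have hsum : √(∑ i, (2 * c * b i) ^ 2) = 2 * c * √(∑ i, b i ^ 2) := by
    simp_rw [mul_pow _ (b _), ← mul_sum]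
    rw [Real.sqrt_mul (by positivity), Real.sqrt_sq (by positivity)]
  calc 2 ^ Fintype.card I * (√2 * c * √(∑ i, b i ^ 2))
      = √2 / 2 * (2 ^ Fintype.card I * √(∑ i, (2 * c * b i) ^ 2)) := by rw [hsum]; ring
    _ ≤ √2 / 2 * (√2 * ∑ σ, |rademacherSum (fun i => 2 * c * b i) σ|) :=
        mul_le_mul_of_nonneg_left (khintchine _) (by positivity)
    _ = ∑ σ, |rademacherSum (fun i => 2 * c * b i) σ| := by
        rw [← mul_assoc, div_mul_eq_mul_div, Real.mul_self_sqrt zero_le_two]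
        ring

end BoolCube

open BoolCube in
theorem multiple_sign_update_lower_bound_general
    (h m w : ℕ) (hh : 1 ≤ h) (hw : w = m * h)
    (ε : ℝ) (hε : 0 < ε)
    (v : ℕ → ℕ → ℝ)
    (δ : ℕ → ℕ → (Fin h × Fin h → Bool) → ℕ → ℕ → ℝ)
    (hδ1 : ∀ (r s : ℕ) (σ : Fin h × Fin h → Bool) (k l : Fin h),
      δ r s σ (r * h + 1 + (k : ℕ)) (s * h + 1 + (l : ℕ)) =
        2 * ε * (if σ (k, l) then 1 else -1))
    (hδ0 : ∀ (r s : ℕ) (σ : Fin h × Fin h → Bool) (k l : ℕ),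
      ¬(r * h + 1 ≤ k ∧ k ≤ (r + 1) * h ∧ s * h + 1 ≤ l ∧ l ≤ (s + 1) * h) →
        δ r s σ k l = 0) :
    (1 / ((m : ℝ) ^ 2 * 2 ^ (h ^ 2))) *
        ∑ r ∈ Finset.range m, ∑ s ∈ Finset.range m, ∑ σ : Fin h × Fin h → Bool,
          |∑ k ∈ Finset.Icc 1 w, ∑ l ∈ Finset.Icc 1 w, δ r s σ k l * v k l| ≥
      Real.sqrt 2 * ε * ((h : ℝ) ^ 2 / (w : ℝ) ^ 2) *
        Real.sqrt (∑ k ∈ Finset.Icc 1 w, ∑ l ∈ Finset.Icc 1 w, (v k l) ^ 2) := by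
  subst hw
  set block : ℕ → ℕ → Fin h × Fin h → ℝ := fun r s p => v (r * h + 1 + p.1) (s * h + 1 + p.2)
  have hblock : ∀ r ∈ range m, ∀ s ∈ range m,
      2 ^ h ^ 2 * (√2 * ε * √(∑ p, block r s p ^ 2))
        ≤ ∑ σ : Fin h × Fin h → Bool,
            |∑ k ∈ Icc 1 (m * h), ∑ l ∈ Icc 1 (m * h), δ r s σ k l * v k l| := by
    intro r hr s hs
    have hinner (σ : Fin h × Fin h → Bool) :
        ∑ k ∈ Icc 1 (m * h), ∑ l ∈ Icc 1 (m * h), δ r s σ k l * v k l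
          = rademacherSum (fun p => 2 * ε * block r s p) σ := by
      rw [sum_Icc_sum_Icc_eq_sum_block (mem_range.mp hr) (mem_range.mp hs) _
        fun k l hkl => by rw [hδ0 r s σ k l hkl, zero_mul]]
      simp only [rademacherSum, hδ1, boolSign, block]
      exact sum_congr rfl fun p _ => by ring
    simpa [hinner, Fintype.card_prod, sq] using khintchine_scaled hε.le (block r s)
  have hnorm : √(∑ k ∈ Icc 1 (m * h), ∑ l ∈ Icc 1 (m * h), v k l ^ 2)
      ≤ ∑ r ∈ range m, ∑ s ∈ range m, √(∑ p, block r s p ^ 2) := by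
    rw [sum_Icc_sum_Icc_eq_sum_blocks]
    refine (Real.sqrt_sum_le_sum_sqrt _ fun r _ => ?_).trans
      (sum_le_sum fun r _ => Real.sqrt_sum_le_sum_sqrt _ fun s _ => ?_) <;> positivity
  have hh0 : (h : ℝ) ≠ 0 := Nat.cast_ne_zero.mpr (by omega)
  rw [ge_iff_le]
  calc √2 * ε * ((h : ℝ) ^ 2 / ((m * h : ℕ) : ℝ) ^ 2) *
        √(∑ k ∈ Icc 1 (m * h), ∑ l ∈ Icc 1 (m * h), v k l ^ 2)
      = 1 / ((m : ℝ) ^ 2 * 2 ^ h ^ 2) * (2 ^ h ^ 2 * (√2 * ε *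
          √(∑ k ∈ Icc 1 (m * h), ∑ l ∈ Icc 1 (m * h), v k l ^ 2))) := by
        push_cast
        field_simp
    _ ≤ 1 / ((m : ℝ) ^ 2 * 2 ^ h ^ 2) *
          ∑ r ∈ range m, ∑ s ∈ range m, 2 ^ h ^ 2 * (√2 * ε * √(∑ p, block r s p ^ 2)) := by
        simp only [← mul_sum]
        gcongr
    _ ≤ _ := by
        gcongr with r hr s hs
        exact hblock r hr s hs

/-- Supplement A.5, lower bound for the multiple-sign update `δ^multiple`: choosing a
uniformly random `h × h` block of the fixed grid partition of the `w × w` image (`w = m·h`)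
and independent Rademacher signs of magnitude `2ε` on its entries, the expectation of
`|⟨δ, v⟩|` is at least `√2·ε·(h²/w²)·‖v‖₂`. -/
theorem multiple_sign_update_lower_bound
    (h m w : ℕ) (hh : 1 ≤ h) (hm : 1 ≤ m) (hw : w = m * h)
    (ε : ℝ) (hε : 0 < ε)
    (v : ℕ → ℕ → ℝ)
    (δ : ℕ → ℕ → (Fin h × Fin h → Bool) → ℕ → ℕ → ℝ)
    (hδ1 : ∀ (r s : ℕ) (σ : Fin h × Fin h → Bool) (k l : Fin h),
      δ r s σ (r * h + 1 + (k : ℕ)) (s * h + 1 + (l : ℕ)) =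
        2 * ε * (if σ (k, l) then 1 else -1))
    (hδ0 : ∀ (r s : ℕ) (σ : Fin h × Fin h → Bool) (k l : ℕ),
      ¬(r * h + 1 ≤ k ∧ k ≤ (r + 1) * h ∧ s * h + 1 ≤ l ∧ l ≤ (s + 1) * h) →
        δ r s σ k l = 0) :
    (1 / ((m : ℝ) ^ 2 * 2 ^ (h ^ 2))) *
        ∑ r ∈ Finset.range m, ∑ s ∈ Finset.range m, ∑ σ : Fin h × Fin h → Bool,
          |∑ k ∈ Finset.Icc 1 w, ∑ l ∈ Finset.Icc 1 w, δ r s σ k l * v k l| ≥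
      Real.sqrt 2 * ε * ((h : ℝ) ^ 2 / (w : ℝ) ^ 2) *
        Real.sqrt (∑ k ∈ Finset.Icc 1 w, ∑ l ∈ Finset.Icc 1 w, (v k l) ^ 2) :=
  multiple_sign_update_lower_bound_general h m w hh hw ε hε v δ hδ1 hδ0
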